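/- Let D ≥ 1 and let 𝓕 and 𝓖 be finite sets of polynomials in ℤ[x_1,…,x_D]. Suppose there exist an algebraically closed field K of characteristic 0 and a point a ∈ K^D such that f(a) = 0 for every f ∈ 𝓕 and g(a) ≠ 0 for some g ∈ 𝓖 (polynomials being evaluated via the canonical ring homomorphism ℤ → K). Then there exists N ∈ ℕ such that for every prime p > N, taking k to be an algebraic closure of 𝔽_p, there is a point b ∈ k^D with f(b) = 0 for every f ∈ 𝓕 and g(b) ≠ 0 for some g ∈ 𝓖 (evaluation via the canonical homomorphism ℤ → k). (This is the spreading-out principle proved in part (B) of the proof of the paper's reduction theorem.) -/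

import Mathlib

/-!
Solvability of the system over a field is a single first-order sentence in the language of rings.
The theories `ACF p` (`p` prime or zero) are complete, so that sentence holds in `K` exactly when
`ACF 0` proves it; by compactness a proof uses finitely many axioms `p ≠ 0`, hence `ACF p` proves
it for all but finitely many primes `p`, and it then holds in the algebraic closure of `𝔽_p`.
-/

open FirstOrder Language Field Ring

theorem FreeCommRing.lift_freeCommRingEquivMvPolynomialInt_symm {σ R : Type*} [CommRing R]
    (v : σ → R) (f : MvPolynomial σ ℤ) :
    lift v ((freeCommRingEquivMvPolynomialInt σ).symm f) = MvPolynomial.aeval v f := by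
  induction f using MvPolynomial.induction_on <;> simp_all [freeCommRingEquivMvPolynomialInt]

namespace FirstOrder.Ring

noncomputable def solvableSentence {σ : Type*} [Finite σ] (𝓕 𝓖 : Finset (MvPolynomial σ ℤ)) :
    Language.ring.Sentence :=
  let term (f : MvPolynomial σ ℤ) : Language.ring.Term (σ ⊕ Fin 0) :=
    (termOfFreeCommRing ((freeCommRingEquivMvPolynomialInt σ).symm f)).relabel Sum.inl
  Formula.iExs (α := Empty) σ <| Formula.relabel Sum.inr <|
    BoundedFormula.iInf (fun f : 𝓕 => term f =' 0) ⊓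
      BoundedFormula.iSup (fun g : 𝓖 => ∼(term g =' 0))

theorem realize_solvableSentence {σ : Type*} [Finite σ] (𝓕 𝓖 : Finset (MvPolynomial σ ℤ))
    {R : Type*} [CommRing R] [CompatibleRing R] :
    R ⊨ solvableSentence 𝓕 𝓖 ↔
      ∃ b : σ → R, (∀ f ∈ 𝓕, MvPolynomial.aeval b f = 0) ∧
        ∃ g ∈ 𝓖, MvPolynomial.aeval b g ≠ 0 := by
  simp [solvableSentence, Sentence.Realize, Formula.Realize, Formula.relabel,
    BoundedFormula.realize_relabel, BoundedFormula.realize_iInf, BoundedFormula.realize_iSup,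
    FreeCommRing.lift_freeCommRingEquivMvPolynomialInt_symm, Function.comp_def]

end FirstOrder.Ring

namespace FirstOrder.Field

theorem ACF_models_of_realize {p : ℕ} (hp : p.Prime ∨ p = 0) {φ : Language.ring.Sentence}
    (K : Type*) [Field K] [IsAlgClosed K] [CharP K p] [CompatibleRing K] (h : K ⊨ φ) :
    Theory.ACF p ⊨ᵇ φ :=
  ((ACF_isComplete hp).realize_sentence_iff φ K).1 h

theorem exists_forall_lt_ACF_models_of_ACF_zero_models {φ : Language.ring.Sentence}
    (h : Theory.ACF 0 ⊨ᵇ φ) : ∃ N : ℕ, ∀ p : ℕ, p.Prime → N < p → Theory.ACF p ⊨ᵇ φ := by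
  obtain ⟨N, hN⟩ := ((finite_ACF_prime_not_realize_of_ACF_zero_realize φ h).image
    ((↑) : Nat.Primes → ℕ)).bddAbove
  refine ⟨N, fun p hp hNp => by_contra fun hpφ => ?_⟩
  have : p ≤ N := hN ⟨⟨p, hp⟩, hpφ, rfl⟩
  omega

theorem exists_forall_lt_realize_of_realize_charZero {φ : Language.ring.Sentence}
    (K : Type*) [Field K] [IsAlgClosed K] [CharZero K] [CompatibleRing K] (hK : K ⊨ φ) :
    ∃ N : ℕ, ∀ p : ℕ, p.Prime → N < p →
      ∀ (k : Type*) [Field k] [IsAlgClosed k] [CharP k p] [CompatibleRing k], k ⊨ φ := by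
  have : CharP K 0 := CharP.ofCharZero K
  obtain ⟨N, hN⟩ := exists_forall_lt_ACF_models_of_ACF_zero_models
    (ACF_models_of_realize (Or.inr rfl) K hK)
  exact ⟨N, fun p hp hNp k _ _ _ _ => (hN p hp hNp).realize_sentence k⟩

end FirstOrder.Field

theorem spreading_out_principle_general (D : ℕ)
    (𝓕 𝓖 : Finset (MvPolynomial (Fin D) ℤ))
    (K : Type*) [Field K] [IsAlgClosed K] [CharZero K] (a : Fin D → K)
    (hzero : ∀ f ∈ 𝓕, MvPolynomial.aeval a f = 0)
    (hnonzero : ∃ g ∈ 𝓖, MvPolynomial.aeval a g ≠ 0) :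
    ∃ N : ℕ, ∀ (p : ℕ) [Fact p.Prime], N < p →
      ∃ b : Fin D → AlgebraicClosure (ZMod p),
        (∀ f ∈ 𝓕, MvPolynomial.aeval b f = 0) ∧
        ∃ g ∈ 𝓖, MvPolynomial.aeval b g ≠ 0 := by
  let _ := compatibleRingOfRing K
  obtain ⟨N, hN⟩ := exists_forall_lt_realize_of_realize_charZero K
    ((realize_solvableSentence 𝓕 𝓖).2 ⟨a, hzero, hnonzero⟩)
  refine ⟨N, fun p hp hNp => ?_⟩
  let _ := compatibleRingOfRing (AlgebraicClosure (ZMod p))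
  exact (realize_solvableSentence 𝓕 𝓖).1 (hN p hp.out hNp _)

/-- **Spreading-out principle.**  If a finite system of integer polynomial equations
`f = 0` (`f ∈ 𝓕`) together with the non-vanishing of at least one `g ∈ 𝓖` has a solution
over some algebraically closed field of characteristic zero, then for all sufficiently
large primes `p` it has a solution over an algebraic closure of `𝔽_p`. -/
theorem spreading_out_principle (D : ℕ) (hD : 1 ≤ D)
    (𝓕 𝓖 : Finset (MvPolynomial (Fin D) ℤ))
    (K : Type*) [Field K] [IsAlgClosed K] [CharZero K] (a : Fin D → K)
    (hzero : ∀ f ∈ 𝓕, MvPolynomial.aeval a f = 0)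
    (hnonzero : ∃ g ∈ 𝓖, MvPolynomial.aeval a g ≠ 0) :
    ∃ N : ℕ, ∀ (p : ℕ) [Fact p.Prime], N < p →
      ∃ b : Fin D → AlgebraicClosure (ZMod p),
        (∀ f ∈ 𝓕, MvPolynomial.aeval b f = 0) ∧
        ∃ g ∈ 𝓖, MvPolynomial.aeval b g ≠ 0 :=
  spreading_out_principle_general D 𝓕 𝓖 K a hzero hnonzero
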